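/- Let (A(t))_{t∈ℕ} be a sequence of n×n row-stochastic real matrices with positive diagonals, and let 0 < t_0 < t_1 < ... be a strictly increasing sequence of natural numbers such that all backward accumulations B_i := A(t_{i+1}, t_i) have the same zero pattern and such that the relation a → b :⇔ (B_0)_{ab} > 0 is reflexive and transitive. Call an index a essential if for every index b with a → b one also has b → a, and inessential otherwise; for essential a, its essential class is I(a) := {b : a → b and b → a}. Assume there are δ_i > 0 with min⁺ B_i ≥ δ_i for all i and ∑_{i=0}^∞ δ_i = ∞. Then: (1) for every essential class I, the submatrix of the backward accumulation A(t, t_0) with rows and columns in I converges as t → ∞ to a row-stochastic matrix all of whose rows are equal (a consensus matrix), and for a ∈ I, b ∉ I, and t ≥ t_0 one has (A(t, t_0))_{ab} = 0; (2) for all inessential indices a, b: (A(t, t_0))_{ab} → 0 as t → ∞; (3) consequently, for every essential class I there is a single row vector v such that for every a ∈ I, the a-th row of A(t, 0) converges to v as t → ∞. -/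
import Mathlib


open Matrix Filter Topology

attribute [local instance] Classical.propDecidable

/-- Backward accumulation `A(t,s) = A(t-1) * A(t-2) * ⋯ * A(s)`
(with `backAcc A s s` the identity matrix). -/
def backAcc {n : ℕ} (A : ℕ → Matrix (Fin n) (Fin n) ℝ) (s t : ℕ) :
    Matrix (Fin n) (Fin n) ℝ :=
  ((List.range' s (t - s)).reverse.map A).prod

/-- A matrix is row-stochastic if all entries are nonnegative and every row
sums to `1`. -/
def RowStochastic {n : ℕ} (A : Matrix (Fin n) (Fin n) ℝ) : Prop :=
  (∀ i j, 0 ≤ A i j) ∧ ∀ i, ∑ j, A i j = 1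

/-- `minPos A` is the smallest positive entry of `A`. -/
noncomputable def minPos {n : ℕ} (A : Matrix (Fin n) (Fin n) ℝ) : ℝ :=
  sInf {x : ℝ | 0 < x ∧ ∃ i j, A i j = x}

/-- An index `a` is essential (w.r.t. the pattern matrix `B`) if every index it
leads to leads back to it. -/
def Essential {n : ℕ} (B : Matrix (Fin n) (Fin n) ℝ) (a : Fin n) : Prop :=
  ∀ b, 0 < B a b → 0 < B b a

/-- `b` belongs to the (essential) class of `a`: `a → b` and `b → a`. -/
def InClass {n : ℕ} (B : Matrix (Fin n) (Fin n) ℝ) (a b : Fin n) : Prop :=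
  0 < B a b ∧ 0 < B b a

section Basic
variable {n : ℕ} (A : ℕ → Matrix (Fin n) (Fin n) ℝ)

lemma backAcc_self (s : ℕ) : backAcc A s s = 1 := by
  simp [backAcc]

lemma backAcc_of_le {s T : ℕ} (h : T ≤ s) : backAcc A s T = 1 := by
  simp [backAcc, Nat.sub_eq_zero_of_le h]

lemma backAcc_succ {s T : ℕ} (h : s ≤ T) : backAcc A s (T + 1) = A T * backAcc A s T := by
  have h1 : T + 1 - s = (T - s) + 1 := by omega
  have h2 : s + (T - s) = T := by omega
  rw [backAcc, backAcc, h1, List.range'_1_concat, h2]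
  simp

lemma backAcc_comp {s u T : ℕ} (h1 : s ≤ u) (h2 : u ≤ T) :
    backAcc A s T = backAcc A u T * backAcc A s u := by
  induction T, h2 using Nat.le_induction with
  | base => rw [backAcc_self, one_mul]
  | succ T hT ih =>
      rw [backAcc_succ A (le_trans h1 hT), backAcc_succ A hT, ih, mul_assoc]

lemma rowStochastic_one : RowStochastic (1 : Matrix (Fin n) (Fin n) ℝ) := by
  constructor
  · intro i j
    by_cases h : i = j <;> simp [Matrix.one_apply, h]
  · intro i; simp [Matrix.one_apply]

lemma RowStochastic.mul {M N : Matrix (Fin n) (Fin n) ℝ} (hM : RowStochastic M)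
    (hN : RowStochastic N) : RowStochastic (M * N) := by
  constructor
  · intro i j
    rw [Matrix.mul_apply]
    exact Finset.sum_nonneg fun k _ => mul_nonneg (hM.1 i k) (hN.1 k j)
  · intro i
    simp only [Matrix.mul_apply]
    rw [Finset.sum_comm]
    calc ∑ k, ∑ j, M i k * N k j = ∑ k, M i k * ∑ j, N k j := by
            simp [Finset.mul_sum]
      _ = 1 := by simp [hN.2, hM.2 i]

lemma backAcc_rowStochastic (hstoch : ∀ s, RowStochastic (A s)) (s T : ℕ) :
    RowStochastic (backAcc A s T) := by
  induction T with
  | zero => rw [backAcc_of_le A (Nat.zero_le s)]; exact rowStochastic_one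
  | succ T ih =>
      rcases le_or_gt s T with h | h
      · rw [backAcc_succ A h]; exact (hstoch T).mul ih
      · rw [backAcc_of_le A h]; exact rowStochastic_one

lemma backAcc_nonneg (hstoch : ∀ s, RowStochastic (A s)) (s T : ℕ) (i j : Fin n) :
    0 ≤ backAcc A s T i j := (backAcc_rowStochastic A hstoch s T).1 i j

lemma entry_le_one {M : Matrix (Fin n) (Fin n) ℝ} (hM : RowStochastic M) (i j : Fin n) :
    M i j ≤ 1 := by
  rw [← hM.2 i]
  exact Finset.single_le_sum (fun k _ => hM.1 i k) (Finset.mem_univ j)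

lemma mul_entry_le {M N : Matrix (Fin n) (Fin n) ℝ} (hM : ∀ i j, 0 ≤ M i j)
    (hN : ∀ i j, 0 ≤ N i j) (a c b : Fin n) : M a c * N c b ≤ (M * N) a b := by
  rw [Matrix.mul_apply]
  exact Finset.single_le_sum (fun k _ => mul_nonneg (hM a k) (hN k b)) (Finset.mem_univ c)

lemma backAcc_diag_pos (hstoch : ∀ s, RowStochastic (A s))
    (hdiag : ∀ s i, 0 < A s i i) (s T : ℕ) (i : Fin n) : 0 < backAcc A s T i i := by
  induction T with
  | zero => rw [backAcc_of_le A (Nat.zero_le s)]; simp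
  | succ T ih =>
      rcases le_or_gt s T with h | h
      · rw [backAcc_succ A h]
        calc (0:ℝ) < A T i i * backAcc A s T i i := mul_pos (hdiag T i) ih
          _ ≤ _ := mul_entry_le (hstoch T).1 (backAcc_nonneg A hstoch s T) i i i
      · rw [backAcc_of_le A h]; simp

lemma minPos_le {M : Matrix (Fin n) (Fin n) ℝ} {i j : Fin n} (h : 0 < M i j) :
    minPos M ≤ M i j :=
  csInf_le ⟨0, fun x hx => le_of_lt hx.1⟩ ⟨h, i, j, rfl⟩

lemma backAcc_entry_le_one (hstoch : ∀ s, RowStochastic (A s)) (s T : ℕ) (i j : Fin n) :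
    backAcc A s T i j ≤ 1 := entry_le_one (backAcc_rowStochastic A hstoch s T) i j

end Basic

lemma decay_aux {δ : ℕ → ℝ}
    (hδdiv : Tendsto (fun N => ∑ i ∈ Finset.range N, δ i) atTop atTop)
    {d : ℕ → ℝ} (hnn : ∀ k, 0 ≤ d k)
    (hstep : ∀ k, d (k + 1) ≤ Real.exp (-(δ k)) * d k) :
    Tendsto d atTop (𝓝 0) := by
  have hbound : ∀ k, d k ≤ d 0 * Real.exp (-(∑ i ∈ Finset.range k, δ i)) := by
    intro k
    induction k with
    | zero => simp
    | succ k ih =>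
        calc d (k+1) ≤ Real.exp (-(δ k)) * d k := hstep k
          _ ≤ Real.exp (-(δ k)) * (d 0 * Real.exp (-(∑ i ∈ Finset.range k, δ i))) :=
              mul_le_mul_of_nonneg_left ih (Real.exp_nonneg _)
          _ = d 0 * Real.exp (-(∑ i ∈ Finset.range (k+1), δ i)) := by
              rw [Finset.sum_range_succ, neg_add, Real.exp_add]; ring
  have hlim : Tendsto (fun k => d 0 * Real.exp (-(∑ i ∈ Finset.range k, δ i))) atTop (𝓝 0) := by
    have h1 : Tendsto (fun k => Real.exp (-(∑ i ∈ Finset.range k, δ i))) atTop (𝓝 0) :=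
      Real.tendsto_exp_atBot.comp (tendsto_neg_atBot_iff.mpr hδdiv)
    simpa using h1.const_mul (d 0)
  exact squeeze_zero hnn hbound hlim

lemma tendsto_of_blocks {t : ℕ → ℕ} (hmono : StrictMono t) {f : ℕ → ℝ}
    (hnn : ∀ T, 0 ≤ f T)
    (hanti : ∀ T, t 0 ≤ T → f (T + 1) ≤ f T)
    (hsub : Tendsto (fun k => f (t k)) atTop (𝓝 0)) :
    Tendsto f atTop (𝓝 0) := by
  have hanti2 : ∀ T1 T2, t 0 ≤ T1 → T1 ≤ T2 → f T2 ≤ f T1 := by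
    intro T1 T2 h1 h12
    induction T2, h12 using Nat.le_induction with
    | base => exact le_refl _
    | succ T2 hT2 ih => exact le_trans (hanti T2 (le_trans h1 hT2)) ih
  rw [Metric.tendsto_atTop] at hsub ⊢
  intro ε hε
  obtain ⟨N, hN⟩ := hsub ε hε
  refine ⟨t N, fun T hT => ?_⟩
  have h1 : f T ≤ f (t N) := hanti2 (t N) T (hmono.monotone (Nat.zero_le N)) hT
  have h2 := hN N le_rfl
  rw [Real.dist_eq, sub_zero, abs_of_nonneg (hnn _)] at h2 ⊢
  exact lt_of_le_of_lt h1 h2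

section Main
variable {n : ℕ} {A : ℕ → Matrix (Fin n) (Fin n) ℝ}
    (hstoch : ∀ s, RowStochastic (A s))
    (hdiag : ∀ s i, 0 < A s i i)
    {t : ℕ → ℕ} (hmono : StrictMono t)
    {B0 : Matrix (Fin n) (Fin n) ℝ}
    (hpattern : ∀ i : ℕ, ∀ a b : Fin n,
      0 < backAcc A (t i) (t (i + 1)) a b ↔ 0 < B0 a b)
    (hrefl : ∀ a, 0 < B0 a a)
    (htrans : ∀ a b c, 0 < B0 a b → 0 < B0 b c → 0 < B0 a c)
    {δ : ℕ → ℝ} (hδpos : ∀ i, 0 < δ i)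
    (hδmin : ∀ i, δ i ≤ minPos (backAcc A (t i) (t (i + 1))))
    (hδdiv : Tendsto (fun N => ∑ i ∈ Finset.range N, δ i) atTop atTop)

include hrefl htrans in
/-- Every index reaches some essential index. -/
lemma exists_essential (a : Fin n) : ∃ e, Essential B0 e ∧ 0 < B0 a e := by
  classical
  set R : Fin n → Finset (Fin n) := fun b => Finset.univ.filter (fun c => 0 < B0 b c) with hR
  have hmemR : ∀ b c, c ∈ R b ↔ 0 < B0 b c := by
    intro b c; simp [hR]
  have hne : (R a).Nonempty := ⟨a, (hmemR a a).2 (hrefl a)⟩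
  obtain ⟨b, hb, hbmin⟩ := Finset.exists_min_image (R a) (fun b => (R b).card) hne
  rw [hmemR] at hb
  refine ⟨b, ?_, hb⟩
  intro c hbc
  have hac : c ∈ R a := (hmemR a c).2 (htrans _ _ _ hb hbc)
  have hsub : R c ⊆ R b := by
    intro x hx; rw [hmemR] at hx ⊢; exact htrans _ _ _ hbc hx
  have : R c = R b := Finset.eq_of_subset_of_card_le hsub (hbmin c hac)
  have : b ∈ R c := by rw [this, hmemR]; exact hrefl b
  rwa [hmemR] at this

include htrans in
lemma essential_closed {e b : Fin n} (he : Essential B0 e) (heb : 0 < B0 e b) :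
    Essential B0 b := by
  intro c hbc
  have hec : 0 < B0 e c := htrans _ _ _ heb hbc
  have hce : 0 < B0 c e := he c hec
  exact htrans _ _ _ hce heb

include htrans in
lemma inClass_closed {a b c : Fin n} (ha : Essential B0 a) (hb : InClass B0 a b)
    (hbc : 0 < B0 b c) : InClass B0 a c := by
  have hac : 0 < B0 a c := htrans _ _ _ hb.1 hbc
  exact ⟨hac, ha c hac⟩

include htrans in
lemma inClass_pos {a b c : Fin n} (hb : InClass B0 a b) (hc : InClass B0 a c) :
    0 < B0 b c := htrans _ _ _ hb.2 hc.1

include hstoch hdiag hmono hpattern in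
/-- Between block times, a positive entry of a single matrix forces a positive
pattern entry. -/
lemma single_pos_pattern {T : ℕ} (hT : t 0 ≤ T) {c d : Fin n}
    (h : 0 < A T c d) : 0 < B0 c d := by
  -- find the block containing T
  have hk : ∀ k, k ≤ t k := fun k => hmono.le_apply
  have hex : ∃ k ≤ T, t k ≤ T := ⟨0, le_trans (hk 0) hT, hT⟩
  classical
  set k := Nat.findGreatest (fun k => t k ≤ T) T with hkdef
  have hkle : t k ≤ T := by
    exact Nat.findGreatest_spec (P := fun k => t k ≤ T) (Nat.zero_le T) hT
  have hklt : T < t (k + 1) := by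
    by_contra hcon
    push_neg at hcon
    have h1 : k + 1 ≤ T := le_trans (hk (k+1)) hcon
    have hgt : k < k + 1 := Nat.lt_succ_self k
    exact Nat.findGreatest_is_greatest (P := fun k => t k ≤ T) hgt h1 hcon
  rw [← hpattern k]
  have hd1 : backAcc A (t k) (t (k+1)) = backAcc A (T+1) (t (k+1)) * backAcc A (t k) (T+1) :=
    backAcc_comp A (by omega) (by omega)
  have hd2 : backAcc A (t k) (T+1) = A T * backAcc A (t k) T := backAcc_succ A hkle
  have hnn := backAcc_nonneg A hstoch
  have step1 : 0 < (A T * backAcc A (t k) T) c d := by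
    calc (0:ℝ) < A T c d * backAcc A (t k) T d d :=
          mul_pos h (backAcc_diag_pos A hstoch hdiag _ _ d)
      _ ≤ _ := mul_entry_le (hstoch T).1 (hnn _ _) c d d
  calc (0:ℝ) < backAcc A (T+1) (t (k+1)) c c * (A T * backAcc A (t k) T) c d :=
        mul_pos (backAcc_diag_pos A hstoch hdiag _ _ c) step1
    _ ≤ _ := by
        rw [hd1, hd2]
        exact mul_entry_le (hnn _ _) (fun i j => ((hstoch T).mul
          (backAcc_rowStochastic A hstoch _ _)).1 i j) c c d
  

variable {P : Fin n → Prop}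

include hstoch hdiag hmono hpattern in
lemma single_zero (hclosed : ∀ c d, P c → 0 < B0 c d → P d) {T : ℕ} (hT : t 0 ≤ T)
    {c d : Fin n} (hc : P c) (hd : ¬ P d) : A T c d = 0 := by
  by_contra hne
  have hpos : 0 < A T c d := lt_of_le_of_ne ((hstoch T).1 c d) (Ne.symm hne)
  exact hd (hclosed c d hc (single_pos_pattern hstoch hdiag hmono hpattern hT hpos))

include hstoch hdiag hmono hpattern in
lemma backAcc_zero (hclosed : ∀ c d, P c → 0 < B0 c d → P d) {s T : ℕ}
    (hs : t 0 ≤ s) (hT : s ≤ T)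
    {c d : Fin n} (hc : P c) (hd : ¬ P d) : backAcc A s T c d = 0 := by
  induction T, hT using Nat.le_induction generalizing c with
  | base =>
      rw [backAcc_self]
      exact Matrix.one_apply_ne (fun h => hd (h ▸ hc))
  | succ T hT ih =>
      rw [backAcc_succ A hT, Matrix.mul_apply]
      apply Finset.sum_eq_zero
      intro e _
      by_cases hPe : P e
      · rw [ih hPe, mul_zero]
      · rw [single_zero hstoch hdiag hmono hpattern hclosed (le_trans hs hT) hc hPe, zero_mul]

include hstoch hdiag hmono hpattern in
lemma backAcc_restricted_sum (hclosed : ∀ c d, P c → 0 < B0 c d → P d) {s T : ℕ}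
    (hs : t 0 ≤ s) (hT : s ≤ T) {c : Fin n} (hc : P c) :
    ∑ d ∈ Finset.univ.filter P, backAcc A s T c d = 1 := by
  classical
  have h1 : ∑ d, backAcc A s T c d = 1 := (backAcc_rowStochastic A hstoch s T).2 c
  rw [← Finset.sum_filter_add_sum_filter_not Finset.univ P] at h1
  have h2 : ∑ d ∈ Finset.univ.filter (fun d => ¬ P d), backAcc A s T c d = 0 :=
    Finset.sum_eq_zero fun d hd => backAcc_zero hstoch hdiag hmono hpattern hclosed hs hT hc
      (Finset.mem_filter.1 hd).2
  rw [h2, add_zero] at h1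
  exact h1

include hstoch hdiag hmono hpattern in
lemma single_restricted_sum (hclosed : ∀ c d, P c → 0 < B0 c d → P d) {T : ℕ}
    (hT : t 0 ≤ T) {c : Fin n} (hc : P c) :
    ∑ d ∈ Finset.univ.filter P, A T c d = 1 := by
  classical
  have h1 : ∑ d, A T c d = 1 := (hstoch T).2 c
  rw [← Finset.sum_filter_add_sum_filter_not Finset.univ P] at h1
  have h2 : ∑ d ∈ Finset.univ.filter (fun d => ¬ P d), A T c d = 0 :=
    Finset.sum_eq_zero fun d hd => single_zero hstoch hdiag hmono hpattern hclosed hT hc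
      (Finset.mem_filter.1 hd).2
  rw [h2, add_zero] at h1
  exact h1


set_option maxHeartbeats 1000000 in
include hstoch hdiag hmono hpattern hrefl htrans hδpos hδmin hδdiv in
lemma part1 (a : Fin n) (ha : Essential B0 a) :
    ∃ v : Fin n → ℝ,
      (∀ c, InClass B0 a c → 0 ≤ v c) ∧
      (∑ c, if InClass B0 a c then v c else 0) = 1 ∧
      (∀ b, InClass B0 a b → ∀ c, InClass B0 a c →
        Tendsto (fun T => backAcc A (t 0) T b c) atTop (nhds (v c))) ∧
      (∀ b, InClass B0 a b → ∀ c, ¬ InClass B0 a c →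
        ∀ T, t 0 ≤ T → backAcc A (t 0) T b c = 0) := by
  classical
  have hclosed : ∀ c d, InClass B0 a c → 0 < B0 c d → InClass B0 a d :=
    fun c d hc h => inClass_closed htrans ha hc h
  set S : Finset (Fin n) := Finset.univ.filter (InClass B0 a) with hSdef
  have hmemS : ∀ c, c ∈ S ↔ InClass B0 a c := by intro c; simp [hSdef]
  have haa : InClass B0 a a := ⟨hrefl a, hrefl a⟩
  have hSne : S.Nonempty := ⟨a, (hmemS a).2 haa⟩
  set Q : ℕ → Matrix (Fin n) (Fin n) ℝ := fun T => backAcc A (t 0) T with hQdef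
  set m : Fin n → ℕ → ℝ := fun c T => S.inf' hSne (fun b => Q T b c) with hmdef
  set Mx : Fin n → ℕ → ℝ := fun c T => S.sup' hSne (fun b => Q T b c) with hMdef
  have ht0k : ∀ k, t 0 ≤ t k := fun k => hmono.monotone (Nat.zero_le k)
  -- basic bounds
  have hml : ∀ c T b, b ∈ S → m c T ≤ Q T b c := by
    intro c T b hb; simp only [hmdef]; exact Finset.inf'_le (fun b => Q T b c) hb
  have hMu : ∀ c T b, b ∈ S → Q T b c ≤ Mx c T := by
    intro c T b hb; simp only [hMdef]; exact Finset.le_sup' (fun b => Q T b c) hb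
  have hle_inf : ∀ c T (x : ℝ), (∀ b ∈ S, x ≤ Q T b c) → x ≤ m c T := by
    intro c T x h; simp only [hmdef]; exact Finset.le_inf' hSne (fun b => Q T b c) h
  have hsup_le : ∀ c T (x : ℝ), (∀ b ∈ S, Q T b c ≤ x) → Mx c T ≤ x := by
    intro c T x h; simp only [hMdef]; exact Finset.sup'_le hSne (fun b => Q T b c) h
  have hex_inf : ∀ c T, ∃ e ∈ S, Q T e c = m c T := by
    intro c T
    obtain ⟨e, he, hem⟩ := Finset.exists_mem_eq_inf' hSne (fun b => Q T b c)
    exact ⟨e, he, by simp only [hmdef]; exact hem.symm⟩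
  have hex_sup : ∀ c T, ∃ e ∈ S, Q T e c = Mx c T := by
    intro c T
    obtain ⟨e, he, hem⟩ := Finset.exists_mem_eq_sup' hSne (fun b => Q T b c)
    exact ⟨e, he, by simp only [hMdef]; exact hem.symm⟩
  have hm0 : ∀ c T, 0 ≤ m c T :=
    fun c T => hle_inf c T 0 (fun b _ => backAcc_nonneg A hstoch _ _ _ _)
  have hM1 : ∀ c T, Mx c T ≤ 1 :=
    fun c T => hsup_le c T 1 (fun b _ => backAcc_entry_le_one A hstoch _ _ _ _)
  have hmM : ∀ c T, m c T ≤ Mx c T :=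
    fun c T => le_trans (hml c T a ((hmemS a).2 haa)) (hMu c T a ((hmemS a).2 haa))
  -- key sum decomposition: for b ∈ S, T ≥ t0 and any matrix... we do it per case
  -- monotone steps
  have hstep : ∀ c T, t 0 ≤ T → m c T ≤ m c (T + 1) ∧ Mx c (T + 1) ≤ Mx c T := by
    intro c T hT
    have hsum : ∀ b ∈ S, Q (T + 1) b c = ∑ e ∈ S, A T b e * Q T e c := by
      intro b hb
      have : Q (T + 1) = A T * Q T := backAcc_succ A hT
      rw [this, Matrix.mul_apply]
      rw [← Finset.sum_filter_add_sum_filter_not Finset.univ (InClass B0 a)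
        (fun e => A T b e * Q T e c)]
      have hz : ∑ e ∈ Finset.univ.filter (fun e => ¬ InClass B0 a e), A T b e * Q T e c = 0 :=
        Finset.sum_eq_zero fun e he => by
          rw [single_zero hstoch hdiag hmono hpattern hclosed hT ((hmemS b).1 hb) (Finset.mem_filter.1 he).2, zero_mul]
      rw [hz, add_zero]
    have hrow : ∀ b ∈ S, ∑ e ∈ S, A T b e = 1 := fun b hb =>
      single_restricted_sum hstoch hdiag hmono hpattern hclosed hT ((hmemS b).1 hb)
    constructor
    · apply hle_inf
      intro b hb
      rw [hsum b hb]
      calc m c T = ∑ e ∈ S, A T b e * m c T := by rw [← Finset.sum_mul, hrow b hb, one_mul]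
        _ ≤ ∑ e ∈ S, A T b e * Q T e c :=
            Finset.sum_le_sum fun e he =>
              mul_le_mul_of_nonneg_left (hml c T e he) ((hstoch T).1 b e)
    · apply hsup_le
      intro b hb
      rw [hsum b hb]
      calc ∑ e ∈ S, A T b e * Q T e c ≤ ∑ e ∈ S, A T b e * Mx c T :=
            Finset.sum_le_sum fun e he =>
              mul_le_mul_of_nonneg_left (hMu c T e he) ((hstoch T).1 b e)
        _ = Mx c T := by rw [← Finset.sum_mul, hrow b hb, one_mul]
  have hmono2 : ∀ c T1 T2, t 0 ≤ T1 → T1 ≤ T2 → m c T1 ≤ m c T2 ∧ Mx c T2 ≤ Mx c T1 := by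
    intro c T1 T2 h1 h12
    induction T2, h12 using Nat.le_induction with
    | base => exact ⟨le_refl _, le_refl _⟩
    | succ T2 hT2 ih =>
        have := hstep c T2 (le_trans h1 hT2)
        exact ⟨le_trans ih.1 this.1, le_trans this.2 ih.2⟩
  -- block contraction
  have hcontr : ∀ c k, Mx c (t (k + 1)) - m c (t (k + 1)) ≤
      Real.exp (-(2 * δ k)) * (Mx c (t k) - m c (t k)) := by
    intro c k
    by_cases hcard : S.card = 1
    · obtain ⟨x, hx⟩ := Finset.card_eq_one.1 hcard
      have hmm : ∀ T, m c T = Mx c T := by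
        intro T
        obtain ⟨e, he, hem⟩ := hex_inf c T
        obtain ⟨f, hf, hfm⟩ := hex_sup c T
        rw [hx, Finset.mem_singleton] at he hf
        rw [← hem, ← hfm, he, hf]
      have h1 : Mx c (t (k+1)) - m c (t (k+1)) = 0 := by rw [hmm]; ring
      have h2 : Mx c (t k) - m c (t k) = 0 := by rw [hmm]; ring
      rw [h1, h2, mul_zero]
    · -- card ≥ 2
      have hcard2 : 2 ≤ S.card := by
        have := Finset.card_pos.2 hSne
        omega
      set B : Matrix (Fin n) (Fin n) ℝ := backAcc A (t k) (t (k + 1)) with hBdef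
      have hBnn : ∀ i j, 0 ≤ B i j := backAcc_nonneg A hstoch _ _
      have hdecomp : ∀ b ∈ S, Q (t (k+1)) b c = ∑ e ∈ S, B b e * Q (t k) e c := by
        intro b hb
        have hQQ : Q (t (k+1)) = B * Q (t k) :=
          backAcc_comp A (ht0k k) (le_of_lt (hmono (Nat.lt_succ_self k)))
        rw [hQQ, Matrix.mul_apply]
        rw [← Finset.sum_filter_add_sum_filter_not Finset.univ (InClass B0 a)
          (fun e => B b e * Q (t k) e c)]
        have hz : ∑ e ∈ Finset.univ.filter (fun e => ¬ InClass B0 a e),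
            B b e * Q (t k) e c = 0 :=
          Finset.sum_eq_zero fun e he => by
            have hz0 : B b e = 0 := by
              rw [hBdef]
              exact backAcc_zero hstoch hdiag hmono hpattern hclosed (ht0k k)
                (le_of_lt (hmono (Nat.lt_succ_self k))) ((hmemS b).1 hb)
                (Finset.mem_filter.1 he).2
            rw [hz0, zero_mul]
        rw [hz, add_zero]
      have hBrow : ∀ b ∈ S, ∑ e ∈ S, B b e = 1 := fun b hb =>
        backAcc_restricted_sum hstoch hdiag hmono hpattern hclosed (ht0k k)
          (le_of_lt (hmono (Nat.lt_succ_self k))) ((hmemS b).1 hb)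
      have hBδ : ∀ b ∈ S, ∀ e ∈ S, δ k ≤ B b e := by
        intro b hb e he
        have hpos : 0 < B0 b e := inClass_pos htrans ((hmemS b).1 hb) ((hmemS e).1 he)
        have : 0 < B b e := (hpattern k b e).2 hpos
        exact le_trans (hδmin k) (minPos_le this)
      have hδ1 : 2 * δ k ≤ 1 := by
        obtain ⟨x, hx, y, hy, hxy⟩ := Finset.one_lt_card.1 hcard2
        have h1 : δ k ≤ B x x := hBδ x hx x hx
        have h2 : δ k ≤ B x y := hBδ x hx y hy
        have h3 : B x x + B x y ≤ ∑ e ∈ S, B x e := by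
          have hsub : {x, y} ⊆ S := by
            intro z hz
            rcases Finset.mem_insert.1 hz with h | h
            · exact h ▸ hx
            · exact (Finset.mem_singleton.1 h) ▸ hy
          calc B x x + B x y = ∑ e ∈ ({x, y} : Finset (Fin n)), B x e := by
                rw [Finset.sum_insert (by simp [hxy]), Finset.sum_singleton]
            _ ≤ ∑ e ∈ S, B x e :=
                Finset.sum_le_sum_of_subset_of_nonneg hsub (fun e _ _ => hBnn x e)
        rw [hBrow x hx] at h3
        linarith
      set Δ : ℝ := Mx c (t k) - m c (t k) with hΔdef
      have hΔnn : 0 ≤ Δ := by rw [hΔdef]; linarith [hmM c (t k)]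
      -- upper bound
      have hub : ∀ b ∈ S, Q (t (k+1)) b c ≤ Mx c (t k) - δ k * Δ := by
        intro b hb
        obtain ⟨e0, he0, he0m⟩ := hex_inf c (t k)
        rw [hdecomp b hb, ← Finset.add_sum_erase S _ he0]
        have h1 : ∑ e ∈ S.erase e0, B b e * Q (t k) e c ≤
            (1 - B b e0) * Mx c (t k) := by
          calc ∑ e ∈ S.erase e0, B b e * Q (t k) e c
              ≤ ∑ e ∈ S.erase e0, B b e * Mx c (t k) :=
                Finset.sum_le_sum fun e he =>
                  mul_le_mul_of_nonneg_left (hMu c (t k) e (Finset.mem_of_mem_erase he))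
                    (hBnn b e)
            _ = (1 - B b e0) * Mx c (t k) := by
                have h := hBrow b hb
                rw [← Finset.add_sum_erase S (fun e => B b e) he0] at h
                have h2 : ∑ e ∈ S.erase e0, B b e = 1 - B b e0 := by linarith
                rw [← Finset.sum_mul, h2]
        have h2 : Q (t k) e0 c = m c (t k) := he0m
        have h3 : δ k ≤ B b e0 := hBδ b hb e0 he0
        have h4 : B b e0 ≤ 1 := by
          calc B b e0 ≤ ∑ e ∈ S, B b e :=
              Finset.single_le_sum (fun e _ => hBnn b e) he0
            _ = 1 := hBrow b hb
        rw [h2]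
        nlinarith [hmM c (t k)]
      -- lower bound
      have hlb : ∀ b ∈ S, m c (t k) + δ k * Δ ≤ Q (t (k+1)) b c := by
        intro b hb
        obtain ⟨e1, he1, he1m⟩ := hex_sup c (t k)
        rw [hdecomp b hb, ← Finset.add_sum_erase S _ he1]
        have h1 : (1 - B b e1) * m c (t k) ≤
            ∑ e ∈ S.erase e1, B b e * Q (t k) e c := by
          calc (1 - B b e1) * m c (t k)
              = ∑ e ∈ S.erase e1, B b e * m c (t k) := by
                have h := hBrow b hb
                rw [← Finset.add_sum_erase S (fun e => B b e) he1] at h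
                have h2 : ∑ e ∈ S.erase e1, B b e = 1 - B b e1 := by linarith
                rw [← Finset.sum_mul, h2]
            _ ≤ ∑ e ∈ S.erase e1, B b e * Q (t k) e c :=
                Finset.sum_le_sum fun e he =>
                  mul_le_mul_of_nonneg_left (hml c (t k) e (Finset.mem_of_mem_erase he))
                    (hBnn b e)
        have h2 : Q (t k) e1 c = Mx c (t k) := he1m
        have h3 : δ k ≤ B b e1 := hBδ b hb e1 he1
        have h4 : B b e1 ≤ 1 := by
          calc B b e1 ≤ ∑ e ∈ S, B b e :=
              Finset.single_le_sum (fun e _ => hBnn b e) he1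
            _ = 1 := hBrow b hb
        rw [h2]
        nlinarith [hmM c (t k)]
      have hMub : Mx c (t (k+1)) ≤ Mx c (t k) - δ k * Δ := hsup_le _ _ _ hub
      have hmlb : m c (t k) + δ k * Δ ≤ m c (t (k+1)) := hle_inf _ _ _ hlb
      have hexp : 1 - 2 * δ k ≤ Real.exp (-(2 * δ k)) := by
        have := Real.add_one_le_exp (-(2 * δ k))
        linarith
      calc Mx c (t (k+1)) - m c (t (k+1)) ≤ (1 - 2 * δ k) * Δ := by
            rw [hΔdef] at *; linarith
        _ ≤ Real.exp (-(2 * δ k)) * Δ := mul_le_mul_of_nonneg_right hexp hΔnn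
        _ = Real.exp (-(2 * δ k)) * (Mx c (t k) - m c (t k)) := by rw [hΔdef]
  -- overall oscillation tends to zero
  have hosc : ∀ c, Tendsto (fun T => Mx c T - m c T) atTop (𝓝 0) := by
    intro c
    apply tendsto_of_blocks hmono
    · intro T; linarith [hmM c T]
    · intro T hT
      have := hstep c T hT
      linarith [this.1, this.2]
    · apply decay_aux (δ := fun k => 2 * δ k)
      · have : Tendsto (fun N => 2 * ∑ i ∈ Finset.range N, δ i) atTop atTop :=
          hδdiv.const_mul_atTop two_pos
        simpa [Finset.mul_sum] using this
      · intro k; linarith [hmM c (t k)]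
      · intro k; exact hcontr c k
  -- limit of m
  set L : Fin n → ℝ := fun c => ⨆ j, m c (j + t 0) with hLdef
  have hmonoL : ∀ c, Monotone (fun j => m c (j + t 0)) := by
    intro c
    apply monotone_nat_of_le_succ
    intro j
    have h : j + 1 + t 0 = (j + t 0) + 1 := by omega
    rw [h]
    exact (hstep c (j + t 0) (by omega)).1
  have hbddL : ∀ c, BddAbove (Set.range (fun j => m c (j + t 0))) := by
    intro c
    refine ⟨1, ?_⟩
    rintro x ⟨j, rfl⟩
    exact le_trans (hmM c _) (hM1 c _)
  have hmtend : ∀ c, Tendsto (fun j => m c (j + t 0)) atTop (𝓝 (L c)) :=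
    fun c => tendsto_atTop_ciSup (hmonoL c) (hbddL c)
  have hMtend : ∀ c, Tendsto (fun j => Mx c (j + t 0)) atTop (𝓝 (L c)) := by
    intro c
    have h1 : Tendsto (fun j => Mx c (j + t 0) - m c (j + t 0)) atTop (𝓝 0) :=
      (tendsto_add_atTop_iff_nat (t 0)).2 (hosc c)
    have := h1.add (hmtend c)
    simpa using this
  have hentry : ∀ b, b ∈ S → ∀ c, Tendsto (fun T => Q T b c) atTop (𝓝 (L c)) := by
    intro b hb c
    rw [← tendsto_add_atTop_iff_nat (t 0)]
    exact tendsto_of_tendsto_of_tendsto_of_le_of_le (hmtend c) (hMtend c)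
      (fun j => hml c (j + t 0) b hb) (fun j => hMu c (j + t 0) b hb)
  -- conclusion
  refine ⟨fun c => if InClass B0 a c then L c else 0, ?_, ?_, ?_, ?_⟩
  · intro c hc
    show (0:ℝ) ≤ if InClass B0 a c then L c else 0
    rw [if_pos hc]
    have h0 : (0:ℝ) ≤ m c (0 + t 0) := hm0 c _
    exact le_trans h0 (le_ciSup (hbddL c) 0)
  · have hsum1 : ∀ j, ∑ c ∈ S, Q (j + t 0) a c = 1 := fun j =>
      backAcc_restricted_sum hstoch hdiag hmono hpattern hclosed le_rfl (by omega) ((hmemS a).1 ((hmemS a).2 haa))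
    have htendsum : Tendsto (fun j => ∑ c ∈ S, Q (j + t 0) a c) atTop (𝓝 (∑ c ∈ S, L c)) := by
      apply tendsto_finset_sum
      intro c _
      exact ((tendsto_add_atTop_iff_nat (t 0)).2 (hentry a ((hmemS a).2 haa) c))
    have h1 : Tendsto (fun j : ℕ => (1:ℝ)) atTop (𝓝 (∑ c ∈ S, L c)) := by
      apply htendsum.congr
      intro j; rw [hsum1 j]
    have h2 : (∑ c ∈ S, L c) = 1 := tendsto_nhds_unique h1 tendsto_const_nhds
    calc (∑ c, if InClass B0 a c then (if InClass B0 a c then L c else 0) else 0)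
        = ∑ c, if InClass B0 a c then L c else 0 := by
          apply Finset.sum_congr rfl
          intro c _
          by_cases h : InClass B0 a c <;> simp [h]
      _ = ∑ c ∈ S, L c := (Finset.sum_filter _ _).symm
      _ = 1 := h2
  · intro b hb c hc
    show Tendsto _ atTop (𝓝 (if InClass B0 a c then L c else 0))
    rw [if_pos hc]
    exact hentry b ((hmemS b).2 hb) c
  · intro b hb c hc T hT
    exact backAcc_zero hstoch hdiag hmono hpattern hclosed le_rfl hT hb hc
set_option maxHeartbeats 1000000 in
include hstoch hdiag hmono hpattern hrefl htrans hδpos hδmin hδdiv in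
lemma part2 (a b : Fin n) (ha : ¬ Essential B0 a) (hb : ¬ Essential B0 b) :
    Tendsto (fun T => backAcc A (t 0) T a b) atTop (𝓝 0) := by
  classical
  have hEclosed : ∀ c d, Essential B0 c → 0 < B0 c d → Essential B0 d :=
    fun c d hc h => essential_closed htrans hc h
  set U : Finset (Fin n) := Finset.univ.filter (fun x => ¬ Essential B0 x) with hUdef
  have hmemU : ∀ c, c ∈ U ↔ ¬ Essential B0 c := by intro c; simp [hUdef]
  have hUne : U.Nonempty := ⟨a, (hmemU a).2 ha⟩
  set Q : ℕ → Matrix (Fin n) (Fin n) ℝ := fun T => backAcc A (t 0) T with hQdef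
  have hQnn : ∀ T i j, 0 ≤ Q T i j := fun T => backAcc_nonneg A hstoch _ _
  set g : ℕ → ℝ := fun T => U.sup' hUne (fun x => ∑ e ∈ U, Q T x e) with hgdef
  have ht0k : ∀ k, t 0 ≤ t k := fun k => hmono.monotone (Nat.zero_le k)
  have hgle : ∀ T x, x ∈ U → (∑ e ∈ U, Q T x e) ≤ g T := by
    intro T x hx; simp only [hgdef]; exact Finset.le_sup' (fun x => ∑ e ∈ U, Q T x e) hx
  have hg_le : ∀ T (y : ℝ), (∀ x ∈ U, ∑ e ∈ U, Q T x e ≤ y) → g T ≤ y := by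
    intro T y h; simp only [hgdef]; exact Finset.sup'_le hUne _ h
  have hg0 : ∀ T, 0 ≤ g T := by
    intro T
    refine le_trans ?_ (hgle T a ((hmemU a).2 ha))
    exact Finset.sum_nonneg fun e _ => hQnn T a e
  -- the key decomposition, for an arbitrary nonneg transition matrix step
  have hkey : ∀ (M : Matrix (Fin n) (Fin n) ℝ), (∀ i j, 0 ≤ M i j) → ∀ (T : ℕ), t 0 ≤ T →
      ∀ x, ∑ e ∈ U, (M * Q T) x e = ∑ d ∈ U, M x d * (∑ e ∈ U, Q T d e) := by
    intro M hM T hT x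
    have h1 : ∑ e ∈ U, (M * Q T) x e = ∑ d, M x d * (∑ e ∈ U, Q T d e) := by
      simp only [Matrix.mul_apply]
      rw [Finset.sum_comm]
      simp [Finset.mul_sum]
    rw [h1, ← Finset.sum_filter_add_sum_filter_not Finset.univ (fun x => ¬ Essential B0 x)
      (fun d => M x d * (∑ e ∈ U, Q T d e))]
    have h2 : ∑ d ∈ Finset.univ.filter (fun d => ¬¬ Essential B0 d),
        M x d * (∑ e ∈ U, Q T d e) = 0 := by
      apply Finset.sum_eq_zero
      intro d hd
      have hde : Essential B0 d := not_not.1 (Finset.mem_filter.1 hd).2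
      have hz : ∑ e ∈ U, Q T d e = 0 := Finset.sum_eq_zero fun e he => by
        have : Q T d e = backAcc A (t 0) T d e := rfl
        rw [this]
        exact backAcc_zero hstoch hdiag hmono hpattern hEclosed le_rfl hT hde ((hmemU e).1 he)
      rw [hz, mul_zero]
    rw [h2, add_zero]
  -- one-step monotonicity
  have hgstep : ∀ T, t 0 ≤ T → g (T + 1) ≤ g T := by
    intro T hT
    apply hg_le
    intro x hx
    have hQ1 : Q (T + 1) = A T * Q T := backAcc_succ A hT
    rw [hQ1, hkey (A T) (hstoch T).1 T hT x]
    calc ∑ d ∈ U, A T x d * (∑ e ∈ U, Q T d e)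
        ≤ ∑ d ∈ U, A T x d * g T :=
          Finset.sum_le_sum fun d hd =>
            mul_le_mul_of_nonneg_left (hgle T d hd) ((hstoch T).1 x d)
      _ = (∑ d ∈ U, A T x d) * g T := by rw [Finset.sum_mul]
      _ ≤ 1 * g T := by
          apply mul_le_mul_of_nonneg_right _ (hg0 T)
          rw [← (hstoch T).2 x]
          exact Finset.sum_le_sum_of_subset_of_nonneg (Finset.subset_univ U)
            (fun d _ _ => (hstoch T).1 x d)
      _ = g T := one_mul _
  -- block contraction
  have hgblock : ∀ k, g (t (k + 1)) ≤ Real.exp (-(δ k)) * g (t k) := by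
    intro k
    have hQ1 : Q (t (k + 1)) = backAcc A (t k) (t (k + 1)) * Q (t k) :=
      backAcc_comp A (ht0k k) (le_of_lt (hmono (Nat.lt_succ_self k)))
    set B : Matrix (Fin n) (Fin n) ℝ := backAcc A (t k) (t (k + 1)) with hBdef
    have hBnn : ∀ i j, 0 ≤ B i j := backAcc_nonneg A hstoch _ _
    have h1 : g (t (k + 1)) ≤ (1 - δ k) * g (t k) := by
      apply hg_le
      intro x hx
      rw [hQ1, hkey B hBnn (t k) (ht0k k) x]
      obtain ⟨e', he'ess, he'pos⟩ := exists_essential hrefl htrans x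
      have he'B : 0 < B x e' := (hpattern k x e').2 he'pos
      have he'δ : δ k ≤ B x e' := le_trans (hδmin k) (minPos_le he'B)
      have he'notU : e' ∉ U := fun h => ((hmemU e').1 h) he'ess
      have hrow : ∑ d ∈ U, B x d ≤ 1 - δ k := by
        have hins : ∑ d ∈ insert e' U, B x d = B x e' + ∑ d ∈ U, B x d :=
          Finset.sum_insert he'notU
        have hle1 : ∑ d ∈ insert e' U, B x d ≤ 1 := by
          have hfull : ∑ d, B x d = 1 := (backAcc_rowStochastic A hstoch _ _).2 x
          rw [← hfull]
          exact Finset.sum_le_sum_of_subset_of_nonneg (Finset.subset_univ _)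
            (fun d _ _ => hBnn x d)
        linarith
      calc ∑ d ∈ U, B x d * (∑ e ∈ U, Q (t k) d e)
          ≤ ∑ d ∈ U, B x d * g (t k) :=
            Finset.sum_le_sum fun d hd =>
              mul_le_mul_of_nonneg_left (hgle (t k) d hd) (hBnn x d)
        _ = (∑ d ∈ U, B x d) * g (t k) := by rw [Finset.sum_mul]
        _ ≤ (1 - δ k) * g (t k) := mul_le_mul_of_nonneg_right hrow (hg0 _)
    have hexp : 1 - δ k ≤ Real.exp (-(δ k)) := by
      have := Real.add_one_le_exp (-(δ k)); linarith
    calc g (t (k + 1)) ≤ (1 - δ k) * g (t k) := h1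
      _ ≤ Real.exp (-(δ k)) * g (t k) := mul_le_mul_of_nonneg_right hexp (hg0 _)
  -- conclude
  have hgt : Tendsto g atTop (𝓝 0) := by
    apply tendsto_of_blocks hmono hg0 hgstep
    exact decay_aux hδdiv (fun k => hg0 (t k)) hgblock
  apply squeeze_zero (fun T => hQnn T a b) (fun T => ?_) hgt
  calc Q T a b ≤ ∑ e ∈ U, Q T a e :=
        Finset.single_le_sum (fun e _ => hQnn T a e) ((hmemU b).2 hb)
    _ ≤ g T := hgle T a ((hmemU a).2 ha)
end Main

set_option maxHeartbeats 1000000 in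
/-- Convergence theorem for inhomogeneous consensus processes: on essential
classes the backward accumulations `A(t, t 0)` converge to consensus matrices,
the inessential-to-inessential entries converge to `0`, and consequently the
rows of `A(t,0)` belonging to a fixed essential class converge to a common row
vector. -/
theorem statement4 {n : ℕ} (A : ℕ → Matrix (Fin n) (Fin n) ℝ)
    (hstoch : ∀ s, RowStochastic (A s))
    (hdiag : ∀ s i, 0 < A s i i)
    (t : ℕ → ℕ) (ht0 : 0 < t 0) (hmono : StrictMono t)
    (B0 : Matrix (Fin n) (Fin n) ℝ) (hB0 : B0 = backAcc A (t 0) (t 1))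
    (hpattern : ∀ i : ℕ, ∀ a b : Fin n,
      0 < backAcc A (t i) (t (i + 1)) a b ↔ 0 < B0 a b)
    (hrefl : ∀ a, 0 < B0 a a)
    (htrans : ∀ a b c, 0 < B0 a b → 0 < B0 b c → 0 < B0 a c)
    (δ : ℕ → ℝ) (hδpos : ∀ i, 0 < δ i)
    (hδmin : ∀ i, δ i ≤ minPos (backAcc A (t i) (t (i + 1))))
    (hδdiv : Tendsto (fun N => ∑ i ∈ Finset.range N, δ i) atTop atTop) :
    (∀ a : Fin n, Essential B0 a → ∃ v : Fin n → ℝ,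
      (∀ c, InClass B0 a c → 0 ≤ v c) ∧
      (∑ c, if InClass B0 a c then v c else 0) = 1 ∧
      (∀ b, InClass B0 a b → ∀ c, InClass B0 a c →
        Tendsto (fun T => backAcc A (t 0) T b c) atTop (nhds (v c))) ∧
      (∀ b, InClass B0 a b → ∀ c, ¬ InClass B0 a c →
        ∀ T, t 0 ≤ T → backAcc A (t 0) T b c = 0)) ∧
    (∀ a b : Fin n, ¬ Essential B0 a → ¬ Essential B0 b →
      Tendsto (fun T => backAcc A (t 0) T a b) atTop (nhds 0)) ∧
    (∀ a : Fin n, Essential B0 a → ∃ v : Fin n → ℝ,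
      ∀ b, InClass B0 a b → ∀ j,
        Tendsto (fun T => backAcc A 0 T b j) atTop (nhds (v j))) := by
  refine ⟨?_, ?_, ?_⟩
  · intro a ha
    exact part1 hstoch hdiag hmono hpattern hrefl htrans hδpos hδmin hδdiv a ha
  · intro a b ha hb
    exact part2 hstoch hdiag hmono hpattern hrefl htrans hδpos hδmin hδdiv a b ha hb
  · intro a ha
    obtain ⟨v, hv0, hv1, hvt, hvz⟩ :=
      part1 hstoch hdiag hmono hpattern hrefl htrans hδpos hδmin hδdiv a ha
    refine ⟨fun j => ∑ c, (if InClass B0 a c then v c else 0) * backAcc A 0 (t 0) c j, ?_⟩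
    intro b hb j
    have hlim : ∀ c, Tendsto (fun T => backAcc A (t 0) T b c) atTop
        (𝓝 (if InClass B0 a c then v c else 0)) := by
      intro c
      by_cases hc : InClass B0 a c
      · rw [if_pos hc]; exact hvt b hb c hc
      · rw [if_neg hc]
        have hev : ∀ᶠ T in atTop, backAcc A (t 0) T b c = 0 := by
          filter_upwards [eventually_ge_atTop (t 0)] with T hT
          exact hvz b hb c hc T hT
        exact Tendsto.congr' (hev.mono fun T h => h.symm) tendsto_const_nhds
    have hsum : Tendsto (fun T => ∑ c, backAcc A (t 0) T b c * backAcc A 0 (t 0) c j) atTop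
        (𝓝 (∑ c, (if InClass B0 a c then v c else 0) * backAcc A 0 (t 0) c j)) := by
      apply tendsto_finset_sum
      intro c _
      exact (hlim c).mul_const (backAcc A 0 (t 0) c j)
    apply hsum.congr'
    filter_upwards [eventually_ge_atTop (t 0)] with T hT
    rw [backAcc_comp A (Nat.zero_le (t 0)) hT, Matrix.mul_apply]
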